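/- Assume EG − F² > 0 everywhere and λ > 0 everywhere. Then for every s ∈ ℝ, K(λ²E, λ²F, λ²G)(s) = λ²·K(E, F, G)(s) + λ²·√(EG − F²)·[ ε²₁₁·u'³ + (2ε²₁₂ − ε¹₁₁)·u'²v' + (ε²₂₂ − 2ε¹₁₂)·u'v'² − ε¹₂₂·v'³ ], all surface quantities being evaluated at (u(s), v(s)); thus the geodesic curvature of a curve is not conformally invariant in general, the deviation being given by the ε-terms. -/

import Mathlib

open Matrix

noncomputable section

/-- Euclidean 3-space. -/
abbrev E3 : Type := EuclideanSpace ℝ (Fin 3)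

/-- The cross product on Euclidean 3-space. -/
def cross3 (a b : E3) : E3 :=
  (WithLp.equiv 2 (Fin 3 → ℝ)).symm
    (crossProduct (WithLp.equiv 2 (Fin 3 → ℝ) a) (WithLp.equiv 2 (Fin 3 → ℝ) b))

/-- The Euclidean dot product on 3-space. -/
def dot3 (a b : E3) : ℝ := inner ℝ a b

/-- Partial derivative in the first (`u`) direction. -/
def Du {F : Type} [NormedAddCommGroup F] [NormedSpace ℝ F] (f : ℝ × ℝ → F) (p : ℝ × ℝ) : F :=
  fderiv ℝ f p (1, 0)

/-- Partial derivative in the second (`v`) direction. -/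
def Dv {F : Type} [NormedAddCommGroup F] [NormedSpace ℝ F] (f : ℝ × ℝ → F) (p : ℝ × ℝ) : F :=
  fderiv ℝ f p (0, 1)

/-- First fundamental form coefficient `E = φ_u ⬝ φ_u`. -/
def Efun (φ : ℝ × ℝ → E3) (p : ℝ × ℝ) : ℝ := dot3 (Du φ p) (Du φ p)

/-- First fundamental form coefficient `F = φ_u ⬝ φ_v`. -/
def Ffun (φ : ℝ × ℝ → E3) (p : ℝ × ℝ) : ℝ := dot3 (Du φ p) (Dv φ p)

/-- First fundamental form coefficient `G = φ_v ⬝ φ_v`. -/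
def Gfun (φ : ℝ × ℝ → E3) (p : ℝ × ℝ) : ℝ := dot3 (Dv φ p) (Dv φ p)

/-- Christoffel symbol `Γ¹₁₁` computed from first-fundamental-form data `(E, F, G)`. -/
def Γ111 (E F G : ℝ × ℝ → ℝ) (p : ℝ × ℝ) : ℝ :=
  (G p * Du E p - 2 * F p * Du F p + F p * Dv E p) / (2 * (E p * G p - F p ^ 2))

/-- Christoffel symbol `Γ²₁₁`. -/
def Γ211 (E F G : ℝ × ℝ → ℝ) (p : ℝ × ℝ) : ℝ :=
  (2 * E p * Du F p - E p * Dv E p - F p * Du E p) / (2 * (E p * G p - F p ^ 2))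

/-- Christoffel symbol `Γ¹₁₂`. -/
def Γ112 (E F G : ℝ × ℝ → ℝ) (p : ℝ × ℝ) : ℝ :=
  (G p * Dv E p - F p * Du G p) / (2 * (E p * G p - F p ^ 2))

/-- Christoffel symbol `Γ²₁₂`. -/
def Γ212 (E F G : ℝ × ℝ → ℝ) (p : ℝ × ℝ) : ℝ :=
  (E p * Du G p - F p * Dv E p) / (2 * (E p * G p - F p ^ 2))

/-- Christoffel symbol `Γ¹₂₂`. -/
def Γ122 (E F G : ℝ × ℝ → ℝ) (p : ℝ × ℝ) : ℝ :=
  (2 * G p * Dv F p - G p * Du G p - F p * Dv G p) / (2 * (E p * G p - F p ^ 2))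

/-- Christoffel symbol `Γ²₂₂`. -/
def Γ222 (E F G : ℝ × ℝ → ℝ) (p : ℝ × ℝ) : ℝ :=
  (E p * Dv G p - 2 * F p * Dv F p + F p * Du G p) / (2 * (E p * G p - F p ^ 2))

/-- Conformal deviation `ε¹₁₁`. -/
def eps111 (E F G lam : ℝ × ℝ → ℝ) (p : ℝ × ℝ) : ℝ :=
  (E p * G p * Du lam p - 2 * F p ^ 2 * Du lam p + E p * F p * Dv lam p) /
    (lam p * (E p * G p - F p ^ 2))

/-- Conformal deviation `ε²₁₁`. -/
def eps211 (E F G lam : ℝ × ℝ → ℝ) (p : ℝ × ℝ) : ℝ :=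
  (E p * F p * Du lam p - E p ^ 2 * Dv lam p) / (lam p * (E p * G p - F p ^ 2))

/-- Conformal deviation `ε¹₁₂`. -/
def eps112 (E F G lam : ℝ × ℝ → ℝ) (p : ℝ × ℝ) : ℝ :=
  (E p * G p * Dv lam p - F p * G p * Du lam p) / (lam p * (E p * G p - F p ^ 2))

/-- Conformal deviation `ε²₁₂`. -/
def eps212 (E F G lam : ℝ × ℝ → ℝ) (p : ℝ × ℝ) : ℝ :=
  (E p * G p * Du lam p - E p * F p * Dv lam p) / (lam p * (E p * G p - F p ^ 2))

/-- Conformal deviation `ε¹₂₂`. -/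
def eps122 (E F G lam : ℝ × ℝ → ℝ) (p : ℝ × ℝ) : ℝ :=
  (F p * G p * Dv lam p - G p ^ 2 * Du lam p) / (lam p * (E p * G p - F p ^ 2))

/-- Conformal deviation `ε²₂₂`. -/
def eps222 (E F G lam : ℝ × ℝ → ℝ) (p : ℝ × ℝ) : ℝ :=
  (E p * G p * Dv lam p - 2 * F p ^ 2 * Dv lam p + F p * G p * Du lam p) /
    (lam p * (E p * G p - F p ^ 2))

/-- The geodesic-curvature expression `K(E,F,G)(s)` of a curve with parameters `u, v`,
computed from first-fundamental-form data `(E, F, G)`. -/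
def Kexpr (u v : ℝ → ℝ) (E F G : ℝ × ℝ → ℝ) (s : ℝ) : ℝ :=
  Real.sqrt (E (u s, v s) * G (u s, v s) - F (u s, v s) ^ 2) *
    (Γ211 E F G (u s, v s) * (deriv u s) ^ 3
      + (2 * Γ212 E F G (u s, v s) - Γ111 E F G (u s, v s)) * ((deriv u s) ^ 2 * deriv v s)
      + (Γ222 E F G (u s, v s) - 2 * Γ112 E F G (u s, v s)) * (deriv u s * (deriv v s) ^ 2)
      - Γ122 E F G (u s, v s) * (deriv v s) ^ 3
      + (deriv u s * deriv (deriv v) s - deriv (deriv u) s * deriv v s))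

/-- with `EG − F² > 0` and `λ > 0` everywhere, for every `s`,
`K(λ²E, λ²F, λ²G)(s) = λ²·K(E,F,G)(s) + λ²·√(EG − F²)·[ε²₁₁u'³ + (2ε²₁₂ − ε¹₁₁)u'²v'
  + (ε²₂₂ − 2ε¹₁₂)u'v'² − ε¹₂₂v'³]`: the geodesic curvature is not conformally invariant
in general, the deviation being the ε-terms. -/
theorem stmt10 (φ : ℝ × ℝ → E3) (lam : ℝ × ℝ → ℝ) (u v : ℝ → ℝ)
    (hφ : ContDiff ℝ (⊤ : ℕ∞) φ) (hlam : ContDiff ℝ (⊤ : ℕ∞) lam)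
    (hu : ContDiff ℝ (⊤ : ℕ∞) u) (hv : ContDiff ℝ (⊤ : ℕ∞) v)
    (hW : ∀ p, 0 < Efun φ p * Gfun φ p - Ffun φ p ^ 2)
    (hlampos : ∀ p, 0 < lam p)
    (s : ℝ) :
    Kexpr u v (fun p => lam p ^ 2 * Efun φ p) (fun p => lam p ^ 2 * Ffun φ p)
        (fun p => lam p ^ 2 * Gfun φ p) s =
      lam (u s, v s) ^ 2 * Kexpr u v (Efun φ) (Ffun φ) (Gfun φ) s
        + lam (u s, v s) ^ 2 *
          Real.sqrt (Efun φ (u s, v s) * Gfun φ (u s, v s) - Ffun φ (u s, v s) ^ 2) *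
          (eps211 (Efun φ) (Ffun φ) (Gfun φ) lam (u s, v s) * (deriv u s) ^ 3
            + (2 * eps212 (Efun φ) (Ffun φ) (Gfun φ) lam (u s, v s)
                - eps111 (Efun φ) (Ffun φ) (Gfun φ) lam (u s, v s)) *
                ((deriv u s) ^ 2 * deriv v s)
            + (eps222 (Efun φ) (Ffun φ) (Gfun φ) lam (u s, v s)
                - 2 * eps112 (Efun φ) (Ffun φ) (Gfun φ) lam (u s, v s)) *
                (deriv u s * (deriv v s) ^ 2)
            - eps122 (Efun φ) (Ffun φ) (Gfun φ) lam (u s, v s) * (deriv v s) ^ 3) := by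
  have hDuφ : ContDiff ℝ (⊤ : ℕ∞) (Du φ) := (hφ.fderiv_right (by simp)).clm_apply contDiff_const
  have hDvφ : ContDiff ℝ (⊤ : ℕ∞) (Dv φ) := (hφ.fderiv_right (by simp)).clm_apply contDiff_const
  have hE : ContDiff ℝ (⊤ : ℕ∞) (Efun φ) := hDuφ.inner ℝ hDuφ
  have hF : ContDiff ℝ (⊤ : ℕ∞) (Ffun φ) := hDuφ.inner ℝ hDvφ
  have hG : ContDiff ℝ (⊤ : ℕ∞) (Gfun φ) := hDvφ.inner ℝ hDvφ
  set q : ℝ × ℝ := (u s, v s) with hqdef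
  have key : ∀ g : ℝ × ℝ → ℝ, ContDiff ℝ (⊤ : ℕ∞) g → ∀ w : ℝ × ℝ,
      fderiv ℝ (fun p => lam p ^ 2 * g p) q w
        = 2 * lam q * fderiv ℝ lam q w * g q + lam q ^ 2 * fderiv ℝ g q w := by
    intro g hg w
    have hl : DifferentiableAt ℝ lam q := (hlam.differentiable (by simp)).differentiableAt
    have hgq : DifferentiableAt ℝ g q := (hg.differentiable (by simp)).differentiableAt
    rw [show (fun p => lam p ^ 2 * g p) = fun p => (lam p * lam p) * g p by ext p; ring]
    rw [fderiv_fun_mul (c := fun p => lam p * lam p) (hl.mul hl) hgq, fderiv_fun_mul hl hl]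
    simp [ContinuousLinearMap.add_apply, ContinuousLinearMap.smul_apply]
    ring
  have hEu : Du (fun p => lam p ^ 2 * Efun φ p) q
      = 2 * lam q * Du lam q * Efun φ q + lam q ^ 2 * Du (Efun φ) q := key _ hE (1, 0)
  have hEv : Dv (fun p => lam p ^ 2 * Efun φ p) q
      = 2 * lam q * Dv lam q * Efun φ q + lam q ^ 2 * Dv (Efun φ) q := key _ hE (0, 1)
  have hFu : Du (fun p => lam p ^ 2 * Ffun φ p) q
      = 2 * lam q * Du lam q * Ffun φ q + lam q ^ 2 * Du (Ffun φ) q := key _ hF (1, 0)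
  have hFv : Dv (fun p => lam p ^ 2 * Ffun φ p) q
      = 2 * lam q * Dv lam q * Ffun φ q + lam q ^ 2 * Dv (Ffun φ) q := key _ hF (0, 1)
  have hGu : Du (fun p => lam p ^ 2 * Gfun φ p) q
      = 2 * lam q * Du lam q * Gfun φ q + lam q ^ 2 * Du (Gfun φ) q := key _ hG (1, 0)
  have hGv : Dv (fun p => lam p ^ 2 * Gfun φ p) q
      = 2 * lam q * Dv lam q * Gfun φ q + lam q ^ 2 * Dv (Gfun φ) q := key _ hG (0, 1)
  have hWq := hW q
  have hLq := hlampos q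
  have hL : lam q ≠ 0 := ne_of_gt hLq
  have hWne : Efun φ q * Gfun φ q - Ffun φ q ^ 2 ≠ 0 := ne_of_gt hWq
  have hsqrt : Real.sqrt (lam q ^ 2 * Efun φ q * (lam q ^ 2 * Gfun φ q)
        - (lam q ^ 2 * Ffun φ q) ^ 2)
      = lam q ^ 2 * Real.sqrt (Efun φ q * Gfun φ q - Ffun φ q ^ 2) := by
    rw [show lam q ^ 2 * Efun φ q * (lam q ^ 2 * Gfun φ q) - (lam q ^ 2 * Ffun φ q) ^ 2
        = (lam q ^ 2) ^ 2 * (Efun φ q * Gfun φ q - Ffun φ q ^ 2) by ring,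
      Real.sqrt_mul (sq_nonneg _), Real.sqrt_sq (sq_nonneg _)]
  have hWne2 : lam q ^ 2 * Efun φ q * (lam q ^ 2 * Gfun φ q) - (lam q ^ 2 * Ffun φ q) ^ 2 ≠ 0 := by
    rw [show lam q ^ 2 * Efun φ q * (lam q ^ 2 * Gfun φ q) - (lam q ^ 2 * Ffun φ q) ^ 2
        = (lam q ^ 2) ^ 2 * (Efun φ q * Gfun φ q - Ffun φ q ^ 2) by ring]
    positivity
  simp only [Kexpr, Γ111, Γ211, Γ112, Γ212, Γ122, Γ222,
    eps111, eps211, eps112, eps212, eps122, eps222]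
  rw [hEu, hEv, hFu, hFv, hGu, hGv, hsqrt]
  set A := Efun φ q with hA
  set B := Ffun φ q with hB
  set C := Gfun φ q with hC
  set Au := Du (Efun φ) q
  set Av := Dv (Efun φ) q
  set Bu := Du (Ffun φ) q
  set Bv := Dv (Ffun φ) q
  set Cu := Du (Gfun φ) q
  set Cv := Dv (Gfun φ) q
  set L := lam q
  set Lu := Du lam q
  set Lv := Dv lam q
  set S := Real.sqrt (A * C - B ^ 2)
  field_simp
  ring
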